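/- Let M be a right R-module and N a left R-module. Then N is absolutely M-pure if and only if the character module M⁺ = Hom_ℤ(M, ℚ/ℤ) is N-subinjective. -/

import Mathlib

universe u

open LinearMap MulOpposite

/-! Character module -/

/-- The character group `M⁺ = Hom_ℤ(M, ℚ/ℤ)`. -/
abbrev CharMod (M : Type u) [AddCommGroup M] : Type u := M →+ AddCircle (1 : ℚ)

/-- If `M` is a left `S`-module, then `M⁺` is a right `S`-module via `(f • r) m = f (r • m)`. -/
instance CharMod.moduleRight (S : Type u) [Ring S] (M : Type u) [AddCommGroup M]
    [Module S M] : Module Sᵐᵒᵖ (CharMod M) where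
  smul r f := f.comp (DistribMulAction.toAddMonoidHom M (unop r))
  one_smul f := by
    apply AddMonoidHom.ext; intro m
    show f ((unop (1 : Sᵐᵒᵖ)) • m) = f m
    simp
  mul_smul r s f := by
    apply AddMonoidHom.ext; intro m
    show f ((unop (r * s)) • m) = f ((unop s) • ((unop r) • m))
    simp [mul_smul]
  smul_zero r := by apply AddMonoidHom.ext; intro m; rfl
  smul_add r f g := by apply AddMonoidHom.ext; intro m; rfl
  add_smul r s f := by
    apply AddMonoidHom.ext; intro m
    show f ((unop (r + s)) • m) = f ((unop r) • m) + f ((unop s) • m)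
    rw [unop_add, add_smul, map_add]
  zero_smul f := by
    apply AddMonoidHom.ext; intro m
    show f ((unop (0 : Sᵐᵒᵖ)) • m) = 0
    simp

/-- If `M` is a right `S`-module, then `M⁺` is a left `S`-module via `(r • f) m = f (m • r)`. -/
instance CharMod.moduleLeft (S : Type u) [Ring S] (M : Type u) [AddCommGroup M]
    [Module Sᵐᵒᵖ M] : Module S (CharMod M) where
  smul r f := f.comp (DistribMulAction.toAddMonoidHom M (op r))
  one_smul f := by
    apply AddMonoidHom.ext; intro m
    show f ((op (1 : S)) • m) = f m
    simp
  mul_smul r s f := by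
    apply AddMonoidHom.ext; intro m
    show f ((op (r * s)) • m) = f ((op s) • ((op r) • m))
    rw [← mul_smul, ← op_mul]
  smul_zero r := by apply AddMonoidHom.ext; intro m; rfl
  smul_add r f g := by apply AddMonoidHom.ext; intro m; rfl
  add_smul r s f := by
    apply AddMonoidHom.ext; intro m
    show f ((op (r + s)) • m) = f ((op r) • m) + f ((op s) • m)
    rw [op_add, add_smul, map_add]
  zero_smul f := by
    apply AddMonoidHom.ext; intro m
    show f ((op (0 : S)) • m) = 0
    simp

/-! Tensor product of a right module and a left module over a (possibly noncommutative) ring -/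

section Tensor

variable (S : Type u) [Ring S]

/-- The bilinearity relations defining `M ⊗_S N` as a quotient of `M ⊗_ℤ N`. -/
def tensorRel (M N : Type u) [AddCommGroup M] [Module Sᵐᵒᵖ M] [AddCommGroup N] [Module S N] :
    Submodule ℤ (TensorProduct ℤ M N) :=
  Submodule.span ℤ {x | ∃ (m : M) (r : S) (n : N),
    x = (op r • m) ⊗ₜ[ℤ] n - m ⊗ₜ[ℤ] (r • n)}

/-- `M ⊗_S N` for a right `S`-module `M` and a left `S`-module `N`. -/
def RTensor (M N : Type u) [AddCommGroup M] [Module Sᵐᵒᵖ M] [AddCommGroup N] [Module S N] :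
    Type u := TensorProduct ℤ M N ⧸ tensorRel S M N

noncomputable instance (M N : Type u) [AddCommGroup M] [Module Sᵐᵒᵖ M] [AddCommGroup N] [Module S N] :
    AddCommGroup (RTensor S M N) :=
  inferInstanceAs (AddCommGroup (TensorProduct ℤ M N ⧸ tensorRel S M N))

/-- Functoriality of `M ⊗_S -` in the left-module variable. -/
noncomputable def rTensorMap (M : Type u) [AddCommGroup M] [Module Sᵐᵒᵖ M] {N B : Type u}
    [AddCommGroup N] [Module S N] [AddCommGroup B] [Module S B] (g : N →ₗ[S] B) :
    RTensor S M N →ₗ[ℤ] RTensor S M B :=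
  Submodule.mapQ _ _ (TensorProduct.map LinearMap.id g.toAddMonoidHom.toIntLinearMap)
    (by
      rw [tensorRel, Submodule.span_le]
      rintro x ⟨m, r, n, rfl⟩
      change TensorProduct.map LinearMap.id g.toAddMonoidHom.toIntLinearMap (_ - _) ∈ tensorRel S M B
      rw [map_sub, TensorProduct.map_tmul, TensorProduct.map_tmul]
      simp only [LinearMap.id_apply, AddMonoidHom.coe_toIntLinearMap, LinearMap.toAddMonoidHom_coe]
      rw [map_smul]
      exact Submodule.subset_span ⟨m, r, g n, rfl⟩)

/-- Functoriality of `- ⊗_S N` in the right-module variable. -/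
noncomputable def lTensorMap {M B : Type u} [AddCommGroup M] [Module Sᵐᵒᵖ M] [AddCommGroup B]
    [Module Sᵐᵒᵖ B] (h : M →ₗ[Sᵐᵒᵖ] B) (N : Type u) [AddCommGroup N] [Module S N] :
    RTensor S M N →ₗ[ℤ] RTensor S B N :=
  Submodule.mapQ _ _ (TensorProduct.map h.toAddMonoidHom.toIntLinearMap LinearMap.id)
    (by
      rw [tensorRel, Submodule.span_le]
      rintro x ⟨m, r, n, rfl⟩
      change TensorProduct.map h.toAddMonoidHom.toIntLinearMap LinearMap.id (_ - _) ∈ tensorRel S B N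
      rw [map_sub, TensorProduct.map_tmul, TensorProduct.map_tmul]
      simp only [LinearMap.id_apply, AddMonoidHom.coe_toIntLinearMap, LinearMap.toAddMonoidHom_coe]
      rw [map_smul]
      exact Submodule.subset_span ⟨h m, r, n, rfl⟩)

end Tensor

/-! Basic relative homological notions -/

section Defs

variable (S : Type u) [Ring S]

/-- `M` is `N`-subinjective: every map `N → M` extends along every embedding of `N`. -/
def Subinjective (N M : Type u) [AddCommGroup N] [Module S N] [AddCommGroup M]
    [Module S M] : Prop :=
  ∀ (K : Type u) [AddCommGroup K] [Module S K] (i : N →ₗ[S] K), Function.Injective i →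
    ∀ f : N →ₗ[S] M, ∃ h : K →ₗ[S] M, h ∘ₗ i = f

/-- `M` is an injective module. -/
def InjMod (M : Type u) [AddCommGroup M] [Module S M] : Prop :=
  ∀ (N : Type u) [AddCommGroup N] [Module S N], Subinjective S N M

/-- `M` is `N`-subprojective. -/
def Subprojective (M N : Type u) [AddCommGroup M] [Module S M] [AddCommGroup N]
    [Module S N] : Prop :=
  ∀ (B : Type u) [AddCommGroup B] [Module S B] (g : B →ₗ[S] N), Function.Surjective g →
    ∀ f : M →ₗ[S] N, ∃ h : M →ₗ[S] B, g ∘ₗ h = f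

/-- A monomorphism of left `S`-modules is pure if it stays injective after
tensoring with any right `S`-module. -/
def IsPureMono {A B : Type u} [AddCommGroup A] [Module S A] [AddCommGroup B] [Module S B]
    (i : A →ₗ[S] B) : Prop :=
  Function.Injective i ∧
    ∀ (M : Type u) [AddCommGroup M] [Module Sᵐᵒᵖ M], Function.Injective (rTensorMap S M i)

/-- `N` is absolutely pure (fp-injective): every embedding of `N` is pure. -/
def AbsPure (N : Type u) [AddCommGroup N] [Module S N] : Prop :=
  ∀ (K : Type u) [AddCommGroup K] [Module S K] (i : N →ₗ[S] K), Function.Injective i →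
    IsPureMono S i

/-- `N` is absolutely `M`-pure, for a right module `M`. -/
def AbsMPure (M : Type u) [AddCommGroup M] [Module Sᵐᵒᵖ M] (N : Type u) [AddCommGroup N]
    [Module S N] : Prop :=
  ∀ (B : Type u) [AddCommGroup B] [Module S B] (i : N →ₗ[S] B), Function.Injective i →
    Function.Injective (rTensorMap S M i)

/-- `M` is pure-injective: maps into `M` extend along pure monomorphisms. -/
def PureInjective (M : Type u) [AddCommGroup M] [Module S M] : Prop :=
  ∀ (A B : Type u) [AddCommGroup A] [Module S A] [AddCommGroup B] [Module S B]
    (i : A →ₗ[S] B), IsPureMono S i → ∀ f : A →ₗ[S] M, ∃ h : B →ₗ[S] M, h ∘ₗ i = f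

/-- `M` is indigent: its subinjectivity domain is exactly the injective modules. -/
def Indigent (M : Type u) [AddCommGroup M] [Module S M] : Prop :=
  ∀ (N : Type u) [AddCommGroup N] [Module S N], Subinjective S N M ↔ InjMod S N

/-- `M` is pi-indigent: `M` is pure-injective and its subinjectivity domain is exactly
the absolutely pure modules. -/
def PiIndigent (M : Type u) [AddCommGroup M] [Module S M] : Prop :=
  PureInjective S M ∧
    ∀ (N : Type u) [AddCommGroup N] [Module S N], Subinjective S N M ↔ AbsPure S N

/-- Flatness via the equational criterion. -/
def FlatMod (M : Type u) [AddCommGroup M] [Module S M] : Prop :=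
  ∀ (n : ℕ) (r : Fin n → S) (x : Fin n → M), (∑ i, r i • x i) = 0 →
    ∃ (m : ℕ) (a : Fin n → Fin m → S) (y : Fin m → M),
      (∀ i, x i = ∑ j, a i j • y j) ∧ ∀ j, (∑ i, r i * a i j) = 0

/-- Finitely presented module. -/
def FPMod (M : Type u) [AddCommGroup M] [Module S M] : Prop :=
  ∃ (n : ℕ) (K : Submodule S (Fin n → S)), K.FG ∧
    Nonempty ((((Fin n → S)) ⧸ K) ≃ₗ[S] M)

/-- `Ext¹_S(M, N) = 0`, expressed by the splitting of every extension of `N` by `M`. -/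
def ExtVanish (M N : Type u) [AddCommGroup M] [Module S M] [AddCommGroup N] [Module S N] :
    Prop :=
  ∀ (B : Type u) [AddCommGroup B] [Module S B] (i : N →ₗ[S] B) (p : B →ₗ[S] M),
    Function.Injective i → Function.Surjective p → LinearMap.range i = LinearMap.ker p →
      ∃ s : M →ₗ[S] B, p ∘ₗ s = LinearMap.id

/-- `Tor₁^S(N, T) = 0` for a right module `N` and a left module `T`. -/
def TorVanish (N : Type u) [AddCommGroup N] [Module Sᵐᵒᵖ N] (T : Type u) [AddCommGroup T]
    [Module S T] : Prop :=
  ∀ (P K : Type u) [AddCommGroup P] [Module Sᵐᵒᵖ P] [AddCommGroup K] [Module Sᵐᵒᵖ K]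
    (i : K →ₗ[Sᵐᵒᵖ] P) (p : P →ₗ[Sᵐᵒᵖ] N), Module.Projective Sᵐᵒᵖ P →
      Function.Injective i → Function.Surjective p →
        LinearMap.range i = LinearMap.ker p → Function.Injective (lTensorMap S i T)

/-- `M` is a Whitehead test module for injectivity (i-test). -/
def ITest (M : Type u) [AddCommGroup M] [Module S M] : Prop :=
  ∀ (N : Type u) [AddCommGroup N] [Module S N], ExtVanish S M N → InjMod S N

/-- `S` is (left) n-saturated: `S` is not semisimple and every finitely generated
non-projective module is i-test. -/
def NSaturated : Prop :=
  ¬ IsSemisimpleRing S ∧ ∀ (M : Type u) [AddCommGroup M] [Module S M],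
    Module.Finite S M → ¬ Module.Projective S M → ITest S M

/-- A submodule is essential if it intersects every nonzero submodule nontrivially. -/
def EssentialIn {M : Type u} [AddCommGroup M] [Module S M] (A : Submodule S M) : Prop :=
  ∀ B : Submodule S M, B ≠ ⊥ → A ⊓ B ≠ ⊥

/-- `M` is a singular module: every element is annihilated by an essential left ideal. -/
def SingularMod (M : Type u) [AddCommGroup M] [Module S M] : Prop :=
  ∀ x : M, EssentialIn S (LinearMap.ker (LinearMap.toSpanSingleton S M x))

/-- `S` is (left) nonsingular: `Z(S) = 0`. -/
def NonsingularRing : Prop :=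
  ∀ r : S, EssentialIn S (LinearMap.ker (LinearMap.toSpanSingleton S S r)) → r = 0

/-- The socle of a module: the supremum of its simple submodules. -/
def socle (M : Type u) [AddCommGroup M] [Module S M] : Submodule S M :=
  sSup {N : Submodule S M | IsAtom N}

/-- von Neumann regular ring. -/
def IsVNR : Prop := ∀ a : S, ∃ r : S, a * r * a = a

/-- (left) V-ring: every simple module is injective. -/
def VRing : Prop :=
  ∀ (M : Type u) [AddCommGroup M] [Module S M], IsSimpleModule S M → InjMod S M

/-- (left) hereditary: every left ideal is projective. -/
def HereditaryRing : Prop := ∀ I : Submodule S S, Module.Projective S I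

/-- (left) semihereditary: every finitely generated left ideal is projective. -/
def SemihereditaryRing : Prop := ∀ I : Submodule S S, I.FG → Module.Projective S I

/-- (left) SI-ring: every singular module is injective. -/
def SIRing : Prop :=
  ∀ (M : Type u) [AddCommGroup M] [Module S M], SingularMod S M → InjMod S M

/-- quasi-Frobenius ring: two-sided Noetherian and self-injective. -/
def QFRing : Prop :=
  IsNoetherianRing S ∧ IsNoetherianRing Sᵐᵒᵖ ∧ InjMod S S ∧ InjMod Sᵐᵒᵖ S

/-- A module is uniserial if its submodules are totally ordered. -/
def Uniserial (M : Type u) [AddCommGroup M] [Module S M] : Prop :=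
  ∀ A B : Submodule S M, A ≤ B ∨ B ≤ A

/-- (left) serial ring: `S` is a finite direct sum of uniserial left ideals. -/
def SerialRing : Prop :=
  ∃ (n : ℕ) (f : Fin n → Submodule S S), (∀ i, Uniserial S (f i)) ∧
    iSupIndep f ∧ iSup f = ⊤

/-- (left) coherent: every finitely generated left ideal is finitely presented. -/
def CoherentRing : Prop := ∀ I : Submodule S S, I.FG → FPMod S I

/-- Indecomposable ring: no nontrivial central idempotents. -/
def IndecompRing : Prop :=
  Nontrivial S ∧ ∀ e : S, e * e = e → (∀ r : S, e * r = r * e) → e = 0 ∨ e = 1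

end Defs

/-! `Hom_R(N, M⁺) ≃ (M ⊗_R N)⁺` naturally in `N`. Hence, for an embedding `i : N → B`, every
map `N → M⁺` extends along `i` iff the dual map `(M ⊗_R B)⁺ → (M ⊗_R N)⁺` is surjective, and since
`ℚ/ℤ` is an injective cogenerator this happens iff `M ⊗_R i` is injective. -/

namespace RTensor

variable (R : Type u) [Ring R] {M N : Type u} [AddCommGroup M] [Module Rᵐᵒᵖ M]
  [AddCommGroup N] [Module R N]

noncomputable def tmul (m : M) (n : N) : RTensor R M N :=
  Submodule.Quotient.mk (m ⊗ₜ[ℤ] n)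

theorem tmul_add_left (m m' : M) (n : N) : tmul R (m + m') n = tmul R m n + tmul R m' n :=
  congrArg Submodule.Quotient.mk (TensorProduct.add_tmul m m' n)

theorem tmul_add_right (m : M) (n n' : N) : tmul R m (n + n') = tmul R m n + tmul R m n' :=
  congrArg Submodule.Quotient.mk (TensorProduct.tmul_add m n n')

theorem op_smul_tmul (m : M) (r : R) (n : N) : tmul R (op r • m) n = tmul R m (r • n) :=
  (Submodule.Quotient.eq _).mpr (Submodule.subset_span ⟨m, r, n, rfl⟩)

variable {R}

theorem addMonoidHom_ext {G : Type*} [AddCommGroup G] {φ ψ : RTensor R M N →+ G}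
    (h : ∀ m n, φ (tmul R m n) = ψ (tmul R m n)) : φ = ψ := by
  ext y
  obtain ⟨t, rfl⟩ := Submodule.Quotient.mk_surjective _ y
  induction t using TensorProduct.induction_on with
  | zero => exact (map_zero φ).trans (map_zero ψ).symm
  | tmul m n => exact h m n
  | add a b ha hb =>
    exact (map_add φ (Submodule.Quotient.mk a) (Submodule.Quotient.mk b)).trans
      ((congrArg₂ (· + ·) ha hb).trans (map_add ψ _ _).symm)

end RTensor

open RTensor

section CharacterAdjunction

variable {R : Type u} [Ring R] {M N : Type u} [AddCommGroup M] [Module Rᵐᵒᵖ M]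
  [AddCommGroup N] [Module R N]

noncomputable def charOfHom (g : N →ₗ[R] CharMod M) : CharacterModule (RTensor R M N) :=
  (Submodule.liftQ (tensorRel R M N)
    (TensorProduct.liftAddHom g.toAddMonoidHom.flip fun z m n => by simp).toIntLinearMap
    (by
      rw [tensorRel, Submodule.span_le]
      rintro _ ⟨m, r, n, rfl⟩
      simp only [SetLike.mem_coe, LinearMap.mem_ker, map_sub, AddMonoidHom.coe_toIntLinearMap,
        TensorProduct.liftAddHom_tmul]
      exact sub_eq_zero.mpr (DFunLike.congr_fun (g.map_smul r n) m).symm)).toAddMonoidHom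

noncomputable def homOfChar (φ : CharacterModule (RTensor R M N)) : N →ₗ[R] CharMod M where
  toFun n := AddMonoidHom.mk' (fun m => φ (tmul R m n)) fun m m' => by
    rw [tmul_add_left, map_add]
  map_add' n n' := by
    ext m
    exact (congrArg φ (tmul_add_right R m n n')).trans (map_add φ _ _)
  map_smul' r n := by
    ext m
    exact congrArg φ (op_smul_tmul R m r n).symm

noncomputable def charHomEquiv : (N →ₗ[R] CharMod M) ≃ CharacterModule (RTensor R M N) where
  toFun := charOfHom
  invFun := homOfChar
  left_inv _ := rfl
  right_inv _ := addMonoidHom_ext fun _ _ => rfl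

theorem charHomEquiv_comp {B : Type u} [AddCommGroup B] [Module R B] (i : N →ₗ[R] B)
    (h : B →ₗ[R] CharMod M) :
    charHomEquiv (h ∘ₗ i) = CharacterModule.dual (rTensorMap R M i) (charHomEquiv h) :=
  addMonoidHom_ext fun _ _ => rfl

theorem rTensorMap_injective_iff_lcomp_surjective {B : Type u} [AddCommGroup B] [Module R B]
    (i : N →ₗ[R] B) :
    Function.Injective (rTensorMap R M i) ↔
      Function.Surjective (fun h : B →ₗ[R] CharMod M => h ∘ₗ i) := by
  have hconj : (fun h : B →ₗ[R] CharMod M => h ∘ₗ i) =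
      charHomEquiv.symm ∘ CharacterModule.dual (rTensorMap R M i) ∘ charHomEquiv := by
    funext h
    exact charHomEquiv.eq_symm_apply.mpr (charHomEquiv_comp i h)
  rw [hconj, Equiv.comp_surjective, Equiv.surjective_comp,
    CharacterModule.dual_surjective_iff_injective]

end CharacterAdjunction

theorem stmt_1 {R : Type u} [Ring R] (M N : Type u)
    [AddCommGroup M] [Module Rᵐᵒᵖ M] [AddCommGroup N] [Module R N] :
    AbsMPure R M N ↔ Subinjective R N (CharMod M) := by
  simp only [AbsMPure, Subinjective, rTensorMap_injective_iff_lcomp_surjective]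
  rfl
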